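/- arXiv:1703.06604 — 4 statements merged into one kernel-verified Lean document; each statement's English description precedes it below -/
import Mathlib

section
/- Let z⁽¹⁾, …, z⁽ᵈ⁾ be distinct points of ℂⁿ. Then the truncated Veronese vectors v_{d-1}(z⁽¹⁾), …, v_{d-1}(z⁽ᵈ⁾) are linearly independent, where v_{d-1}(z) = (z^α)_{|α| ≤ d-1} is the vector of all monomials of total degree at most d-1 evaluated at z. -/
/-!
A relation `∑ₖ cₖ v_{d-1}(z⁽ᵏ⁾) = 0` says that `∑ₖ cₖ p(z⁽ᵏ⁾) = 0` for every polynomial `p` of total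
degree at most `d - 1`. For each `k₀` there is such a `p`, a product of `d - 1` affine factors
`Xᵢ - z⁽ʲ⁾ᵢ` (one coordinate `i` separating `z⁽ʲ⁾` from `z⁽ᵏ⁰⁾` for each `j ≠ k₀`), which vanishes at
every `z⁽ʲ⁾` except `z⁽ᵏ⁰⁾`; hence `c_{k₀} = 0`.
-/

open Finset

namespace MvPolynomial

variable {R σ : Type*}

theorem sum_mul_eval_eq_zero_of_totalDegree_le [CommSemiring R] [Fintype σ] {ι : Type*}
    (s : Finset ι) (z : ι → σ → R) (c : ι → R) (m : ℕ)
    (hc : ∀ α : σ → ℕ, ∑ i, α i ≤ m → ∑ k ∈ s, c k * ∏ i, z k i ^ α i = 0)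
    (p : MvPolynomial σ R) (hp : p.totalDegree ≤ m) :
    ∑ k ∈ s, c k * eval (z k) p = 0 := by
  simp_rw [eval_eq', mul_sum]
  rw [sum_comm]
  refine sum_eq_zero fun α hα => ?_
  have hdeg : ∑ i, α i ≤ m :=
    calc ∑ i, α i = α.sum fun _ e => e := (Finsupp.sum_fintype α (fun _ e => e) fun _ => rfl).symm
      _ ≤ p.totalDegree := le_totalDegree hα
      _ ≤ m := hp
  calc ∑ k ∈ s, c k * (coeff α p * ∏ i, z k i ^ α i)
      = coeff α p * ∑ k ∈ s, c k * ∏ i, z k i ^ α i := by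
        rw [mul_sum]; exact sum_congr rfl fun _ _ => by ring
    _ = 0 := by rw [hc α hdeg, mul_zero]

theorem exists_totalDegree_le_one_eval_ne_zero_eval_eq_zero [CommRing R] [Nontrivial R] {x y : σ → R}
    (hxy : x ≠ y) : ∃ q : MvPolynomial σ R, q.totalDegree ≤ 1 ∧ eval x q ≠ 0 ∧ eval y q = 0 := by
  obtain ⟨i, hi⟩ := Function.ne_iff.mp hxy
  refine ⟨X i - C (y i), ?_, by simpa [sub_eq_zero] using hi, by simp⟩
  exact (totalDegree_sub_C_le _ _).trans (totalDegree_X i).le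

theorem exists_totalDegree_le_card_eval_ne_zero_vanishing_on [CommRing R] [IsDomain R]
    [DecidableEq (σ → R)] {x : σ → R} {S : Finset (σ → R)} (hx : x ∉ S) :
    ∃ p : MvPolynomial σ R, p.totalDegree ≤ #S ∧ eval x p ≠ 0 ∧ ∀ y ∈ S, eval y p = 0 := by
  induction S using Finset.induction_on with
  | empty => exact ⟨1, by simp, by simp, by simp⟩
  | insert y S hyS ih =>
    obtain ⟨hxy, hxS⟩ := not_or.mp (mem_insert.not.mp hx)
    obtain ⟨p, hpdeg, hpx, hpS⟩ := ih hxS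
    obtain ⟨q, hqdeg, hqx, hqy⟩ := exists_totalDegree_le_one_eval_ne_zero_eval_eq_zero hxy
    refine ⟨p * q, ?_, by simp [hpx, hqx], ?_⟩
    · rw [card_insert_of_notMem hyS]
      exact (totalDegree_mul p q).trans (add_le_add hpdeg hqdeg)
    · simp only [mem_insert, forall_eq_or_imp, map_mul]
      exact ⟨by rw [hqy, mul_zero], fun w hw => by rw [hpS w hw, zero_mul]⟩

end MvPolynomial

open MvPolynomial in
theorem veronese_vectors_linearly_independent
    (n d : ℕ) (z : Fin d → (Fin n → ℂ)) (hz : Function.Injective z) :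
    LinearIndependent ℂ
      (fun k : Fin d =>
        (fun α : {α : Fin n → ℕ // ∑ i, α i ≤ d - 1} =>
          ∏ i, (z k i) ^ (α.1 i))) := by
  classical
  rw [Fintype.linearIndependent_iff]
  intro c hc k₀
  have hrel : ∀ p : MvPolynomial (Fin n) ℂ, p.totalDegree ≤ d - 1 →
      ∑ k, c k * eval (z k) p = 0 :=
    sum_mul_eval_eq_zero_of_totalDegree_le _ z c _ fun α hα => by
      simpa using congrFun hc ⟨α, hα⟩
  have hk₀ : z k₀ ∉ (univ.erase k₀).image z := by
    simp [hz.eq_iff]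
  obtain ⟨p, hpdeg, hpk₀, hpS⟩ := exists_totalDegree_le_card_eval_ne_zero_vanishing_on hk₀
  have hcard : #((univ.erase k₀).image z) ≤ d - 1 :=
    card_image_le.trans (by simp [card_erase_of_mem])
  have hsum := hrel p (hpdeg.trans hcard)
  rw [sum_eq_single_of_mem k₀ (mem_univ k₀) fun k _ hk => by
    rw [hpS _ (mem_image_of_mem z (mem_erase.mpr ⟨hk, mem_univ k⟩)), mul_zero]] at hsum
  exact (mul_eq_zero.mp hsum).resolve_right hpk₀
end

section
/- Let y = (y_{α,β})_{0≤α,β≤d} be a Hermitian Toeplitz matrix of complex numbers (y_{α,β} depends only on α-β and y_{β,α} = conj(y_{α,β})) that is positive semidefinite, and suppose the truncated matrix M_{d-1} = (y_{α,β})_{0≤α,β≤d-1} has the same rank r as M_d = (y_{α,β})_{0≤α,β≤d}. Factor M_d = X*X with X ∈ ℂ^{r×(d+1)} and columns x₀,…,x_d. Then there exists a unitary matrix T ∈ ℂ^{r×r} such that T x_α = x_{α+1} for all 0 ≤ α ≤ d-1. -/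
/-!
Write `A` and `B` for the matrices with columns `x₀, …, x_{d-1}` and `x₁, …, x_d`. The Toeplitz
property says `Bᴴ B = Aᴴ A`, so `x_α ↦ x_{α+1}` is a well-defined isometry on the column space of
`A`, which is everything because `rank A = rank M_{d-1} = r`. Explicitly `T = B Aᴴ (A Aᴴ)⁻¹`.
-/

open Matrix
open scoped ComplexOrder

namespace Matrix

theorem isUnit_of_rank_eq_card {m K : Type*} [Fintype m] [DecidableEq m] [Field K]
    {G : Matrix m m K} (h : G.rank = Fintype.card m) : IsUnit G := by
  refine mulVec_surjective_iff_isUnit.1 ((LinearMap.range_eq_top (f := G.mulVecLin)).1 ?_)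
  exact Submodule.eq_top_of_finrank_eq (by simpa [rank] using h)

variable {m n p R 𝕜 : Type*} [Fintype m] [Fintype n]

theorem mul_eq_zero_iff_of_conjTranspose_mul_self_eq [PartialOrder R] [NonUnitalRing R]
    [StarRing R] [StarOrderedRing R] [NoZeroDivisors R] {A B : Matrix m n R}
    (h : Bᴴ * B = Aᴴ * A) {Q : Matrix n p R} : B * Q = 0 ↔ A * Q = 0 := by
  rw [← conjTranspose_mul_self_mul_eq_zero, h, conjTranspose_mul_self_mul_eq_zero]

theorem exists_mem_unitaryGroup_mul_eq_of_conjTranspose_mul_self_eq [DecidableEq m] [Field 𝕜]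
    [PartialOrder 𝕜] [StarRing 𝕜] [StarOrderedRing 𝕜] {A B : Matrix m n 𝕜}
    (hA : A.rank = Fintype.card m) (h : Bᴴ * B = Aᴴ * A) :
    ∃ T ∈ unitaryGroup m 𝕜, T * A = B := by
  set G := A * Aᴴ
  have hG : IsUnit G := isUnit_of_rank_eq_card (by rw [rank_self_mul_conjTranspose, hA])
  set T := B * Aᴴ * G⁻¹
  have hTA : T * A = B := by
    classical
    -- `Aᴴ G⁻¹ A` is the identity on the row space of `A`, hence also on that of `B`.
    have hAP : A * (1 - Aᴴ * G⁻¹ * A) = 0 := by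
      rw [Matrix.mul_sub, Matrix.mul_one, ← Matrix.mul_assoc, ← Matrix.mul_assoc,
        mul_nonsing_inv _ ((isUnit_iff_isUnit_det G).1 hG), Matrix.one_mul, sub_self]
    have hBP := (mul_eq_zero_iff_of_conjTranspose_mul_self_eq h).2 hAP
    rw [Matrix.mul_sub, Matrix.mul_one, sub_eq_zero] at hBP
    calc T * A = B * (Aᴴ * G⁻¹ * A) := by simp only [T, Matrix.mul_assoc]
      _ = B := hBP.symm
  clear_value T
  -- `Aᴴ (Tᴴ T) A = Aᴴ A`; sandwiching between `A` and `Aᴴ` and cancelling `G` gives `Tᴴ T = 1`.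
  have hGram : Aᴴ * (Tᴴ * T) * A = Aᴴ * A := by
    rw [← h, ← hTA, conjTranspose_mul]
    simp only [Matrix.mul_assoc]
  have hGTG : G * (Tᴴ * T) * G = G * 1 * G := by
    calc G * (Tᴴ * T) * G = A * (Aᴴ * (Tᴴ * T) * A) * Aᴴ := by simp only [G, Matrix.mul_assoc]
      _ = G * 1 * G := by rw [hGram]; simp only [G, Matrix.mul_one, Matrix.mul_assoc]
  refine ⟨T, mem_unitaryGroup_iff'.2 ?_, hTA⟩
  exact hG.mul_left_cancel (hG.mul_right_cancel hGTG)

end Matrix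

theorem toeplitz_psd_rank_preserving_unitary_shift_general
    (d r : ℕ) (y : Matrix (Fin (d + 1)) (Fin (d + 1)) ℂ)
    (htoep : ∀ α β : Fin d, y α.succ β.succ = y α.castSucc β.castSucc)
    (hrank' : (y.submatrix (Fin.castSucc) (Fin.castSucc)).rank = r)
    (X : Matrix (Fin r) (Fin (d + 1)) ℂ) (hX : y = Xᴴ * X) :
    ∃ T : Matrix (Fin r) (Fin r) ℂ, Tᴴ * T = 1 ∧ T * Tᴴ = 1 ∧
      ∀ α : Fin d, T *ᵥ (fun i => X i α.castSucc) = (fun i => X i α.succ) := by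
  set A := X.submatrix id Fin.castSucc
  set B := X.submatrix id Fin.succ
  have hGramA : Aᴴ * A = y.submatrix Fin.castSucc Fin.castSucc := by
    ext i j; simp [A, hX, mul_apply]
  have hGramB : Bᴴ * B = Aᴴ * A := by
    ext i j; simpa [A, B, hX, mul_apply] using htoep i j
  have hrankA : A.rank = Fintype.card (Fin r) := by
    rw [← rank_conjTranspose_mul_self, hGramA, hrank', Fintype.card_fin]
  obtain ⟨T, hT, hTA⟩ := exists_mem_unitaryGroup_mul_eq_of_conjTranspose_mul_self_eq hrankA hGramB
  exact ⟨T, mem_unitaryGroup_iff'.1 hT, mem_unitaryGroup_iff.1 hT,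
    fun α => funext fun i => congrFun (congrFun hTA i) α⟩

theorem toeplitz_psd_rank_preserving_unitary_shift
    (d r : ℕ) (y : Matrix (Fin (d + 1)) (Fin (d + 1)) ℂ)
    (hherm : y.IsHermitian)
    (htoep : ∀ α β : Fin d, y α.succ β.succ = y α.castSucc β.castSucc)
    (hpsd : y.PosSemidef)
    (hrank : y.rank = r)
    (hrank' : (y.submatrix (Fin.castSucc) (Fin.castSucc)).rank = r)
    (X : Matrix (Fin r) (Fin (d + 1)) ℂ) (hX : y = Xᴴ * X) :
    ∃ T : Matrix (Fin r) (Fin r) ℂ, Tᴴ * T = 1 ∧ T * Tᴴ = 1 ∧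
      ∀ α : Fin d, T *ᵥ (fun i => X i α.castSucc) = (fun i => X i α.succ) :=
  toeplitz_psd_rank_preserving_unitary_shift_general d r y htoep hrank' X hX
end

section
/- Let T₁,…,Tₙ ∈ ℂ^{r×r} satisfy Tᵢ = P Dᵢ Pᵀ where P is complex orthogonal (PᵀP = PPᵀ = I) and each Dᵢ is diagonal. For x₀ ∈ ℂ^r and α ∈ ℕⁿ set x_α := T^α x₀ and y_{α+β} := x_αᵀ x_β. Then y_{α+β} = Σ_{k=1}^r (x₀ᵀ p_k)² d_k^{α+β}, where p_k are the columns of P and d_k = ((D₁)_{kk},…,(Dₙ)_{kk}); in particular y_{α+β} only depends on the sum α+β (Hankel structure) and y is represented by the complex atomic measure Σ_k (x₀ᵀ p_k)² δ_{d_k}. -/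
/-!
Conjugation by `P` is multiplicative because `Pᵀ = P⁻¹`, so every shift monomial is
`T^α = P diag(d^α) Pᵀ`. Since `P` preserves the bilinear form `u ⬝ᵥ v`, the moment
`x_αᵀ x_β` is the diagonal form `∑ₖ wₖ² d_k^α d_k^β` in `w = Pᵀ x₀`, and
`d_k^α d_k^β = d_k^{α+β}`.
-/

open Matrix

namespace Matrix

variable {m R : Type*} [Fintype m] [DecidableEq m] [CommSemiring R] {n : ℕ}

theorem list_prod_ofFn_pow_conj_of_transpose {P : Matrix m m R} (hPP : Pᵀ * P = 1)
    (hPP' : P * Pᵀ = 1) (A : Fin n → Matrix m m R) (α : Fin n → ℕ) :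
    (List.ofFn fun i => (P * A i * Pᵀ) ^ α i).prod =
      P * (List.ofFn fun i => A i ^ α i).prod * Pᵀ := by
  let conj := MulDistribMulAction.toMonoidHom (Matrix m m R)
    (ConjAct.toConjAct (⟨P, Pᵀ, hPP', hPP⟩ : (Matrix m m R)ˣ))
  have hconj (B : Matrix m m R) : conj B = P * B * Pᵀ := ConjAct.units_smul_def _ B
  simp_rw [← hconj, ← map_pow, map_list_prod, List.map_ofFn]
  rfl

theorem list_prod_ofFn_diagonal_pow (d : Fin n → m → R) (α : Fin n → ℕ) :
    (List.ofFn fun i => diagonal (d i) ^ α i).prod = diagonal fun k => ∏ i, d i k ^ α i := by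
  calc (List.ofFn fun i => diagonal (d i) ^ α i).prod
      = diagonalRingHom m R (List.ofFn fun i => d i ^ α i).prod := by
        simp only [map_list_prod, List.map_ofFn, Function.comp_def, diagonalRingHom_apply,
          diagonal_pow]
    _ = diagonal fun k => ∏ i, d i k ^ α i := by
        rw [List.prod_ofFn, diagonalRingHom_apply]
        congr with k
        simp only [Finset.prod_apply, Pi.pow_apply]

theorem dotProduct_mulVec_mulVec_of_transpose_mul_self {P : Matrix m m R} (hPP : Pᵀ * P = 1)
    (u v : m → R) : (P *ᵥ u) ⬝ᵥ (P *ᵥ v) = u ⬝ᵥ v := by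
  rw [dotProduct_mulVec, ← vecMul_transpose, vecMul_vecMul, hPP, vecMul_one]

theorem dotProduct_conj_diagonal_mulVec {P : Matrix m m R} (hPP : Pᵀ * P = 1)
    (e f x : m → R) :
    ((P * diagonal e * Pᵀ) *ᵥ x) ⬝ᵥ ((P * diagonal f * Pᵀ) *ᵥ x) =
      ∑ k, (x ⬝ᵥ fun i => P i k) ^ 2 * (e k * f k) := by
  simp only [← mulVec_mulVec]
  rw [dotProduct_mulVec_mulVec_of_transpose_mul_self hPP, dotProduct]
  refine Finset.sum_congr rfl fun k _ => ?_
  rw [mulVec_diagonal, mulVec_diagonal, mulVec_transpose, vecMul]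
  ring

end Matrix

theorem takagi_shifts_hankel_moments_atomic_measure
    (n r : ℕ) (T : Fin n → Matrix (Fin r) (Fin r) ℂ)
    (P : Matrix (Fin r) (Fin r) ℂ) (hP : Pᵀ * P = 1 ∧ P * Pᵀ = 1)
    (D : Fin n → Matrix (Fin r) (Fin r) ℂ) (hD : ∀ i, (D i).IsDiag)
    (hT : ∀ i, T i = P * D i * Pᵀ)
    (x₀ : Fin r → ℂ) :
    (∀ α β : Fin n → ℕ,
      ((List.ofFn (fun i => T i ^ α i)).prod *ᵥ x₀) ⬝ᵥ
          ((List.ofFn (fun i => T i ^ β i)).prod *ᵥ x₀) =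
        ∑ k, (x₀ ⬝ᵥ (fun i => P i k)) ^ 2 * ∏ i, (D i k k) ^ (α i + β i)) ∧
    (∀ α β α' β' : Fin n → ℕ, α + β = α' + β' →
      ((List.ofFn (fun i => T i ^ α i)).prod *ᵥ x₀) ⬝ᵥ
          ((List.ofFn (fun i => T i ^ β i)).prod *ᵥ x₀) =
        ((List.ofFn (fun i => T i ^ α' i)).prod *ᵥ x₀) ⬝ᵥ
          ((List.ofFn (fun i => T i ^ β' i)).prod *ᵥ x₀)) := by
  have shift_eq (α : Fin n → ℕ) : (List.ofFn fun i => T i ^ α i).prod =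
      P * diagonal (fun k => ∏ i, D i k k ^ α i) * Pᵀ := by
    have hT_diag (i : Fin n) : T i = P * diagonal (D i).diag * Pᵀ := by
      rw [hT i, (hD i).diagonal_diag]
    simp only [hT_diag]
    rw [list_prod_ofFn_pow_conj_of_transpose hP.1 hP.2, list_prod_ofFn_diagonal_pow]
    rfl
  have moment (α β : Fin n → ℕ) :
      ((List.ofFn fun i => T i ^ α i).prod *ᵥ x₀) ⬝ᵥ
          ((List.ofFn fun i => T i ^ β i).prod *ᵥ x₀) =
        ∑ k, (x₀ ⬝ᵥ fun i => P i k) ^ 2 * ∏ i, D i k k ^ (α i + β i) := by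
    simp only [shift_eq, dotProduct_conj_diagonal_mulVec hP.1, pow_add, Finset.prod_mul_distrib]
  refine ⟨moment, fun α β α' β' hsum => ?_⟩
  simp only [moment, ← Pi.add_apply α, ← Pi.add_apply α', hsum]
end

section
/- Suppose shifts T₁,…,Tₙ ∈ ℂ^{r×r} and vectors (x_α)_{|α|≤d} in ℂ^r satisfy x_αᵀ x_β = y_{α+β} (y depending only on α+β), T_k x_α = x_{α+e_k} for |α| ≤ d-1, and span{x_α : |α| ≤ d-1} = ℂ^r. Then each T_k is complex symmetric: T_kᵀ = T_k. -/
/-! Shifting an index on either side of `x_α ⬝ᵥ x_β` lands on the same moment `y_{α+β+e_k}`, so the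
bilinear form `(u, v) ↦ u ⬝ᵥ T_k v` is symmetric on the vectors `x_α` with `|α| ≤ d - 1`. These span
the whole space, hence the form is symmetric everywhere, i.e. `T_kᵀ = T_k`. -/

open Matrix

namespace Matrix

variable {R m : Type*} [CommSemiring R] [Fintype m] [DecidableEq m]

theorem isSymm_of_dotProduct_mulVec_comm_on_spanning {S : Set (m → R)}
    (hS : Submodule.span R S = ⊤) {A : Matrix m m R}
    (h : ∀ u ∈ S, ∀ v ∈ S, u ⬝ᵥ A *ᵥ v = A *ᵥ u ⬝ᵥ v) : A.IsSymm := by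
  have hform : toLinearMap₂' R Aᵀ = toLinearMap₂' R A :=
    LinearMap.ext_on hS fun u hu => LinearMap.ext_on hS fun v hv => by
      rw [toLinearMap₂'_apply', toLinearMap₂'_apply', dotProduct_mulVec, vecMul_transpose]
      exact (h u hu v hv).symm
  exact (toLinearMap₂' R).injective hform

end Matrix

theorem eq_zero_of_sum_le_zero {ι : Type*} [Fintype ι] {α : ι → ℕ} (hα : ∑ i, α i ≤ 0) :
    α = 0 := by
  funext i
  simpa using Finset.sum_eq_zero_iff.mp (Nat.le_zero.mp hα) i (Finset.mem_univ i)

theorem hankel_dotProduct_mulVec_comm {ι R m : Type*} [Fintype ι] [DecidableEq ι] [CommSemiring R]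
    [Fintype m] {d : ℕ} {T : Matrix m m R} {x : (ι → ℕ) → m → R} {y : (ι → ℕ) → R} {k : ι}
    (hhankel : ∀ α β : ι → ℕ, ∑ i, α i ≤ d → ∑ i, β i ≤ d → x α ⬝ᵥ x β = y (α + β))
    (hshift : ∀ α : ι → ℕ, ∑ i, α i ≤ d - 1 → T *ᵥ x α = x (α + Pi.single k 1))
    {α β : ι → ℕ} (hα : ∑ i, α i ≤ d - 1) (hβ : ∑ i, β i ≤ d - 1) :
    x α ⬝ᵥ T *ᵥ x β = T *ᵥ x α ⬝ᵥ x β := by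
  rcases d.eq_zero_or_pos with rfl | hd
  · -- `d - 1` truncates to `0`, so the only admissible index is `0`.
    rw [eq_zero_of_sum_le_zero hα, eq_zero_of_sum_le_zero hβ]
    exact dotProduct_comm _ _
  have hsucc : ∀ γ : ι → ℕ, ∑ i, γ i ≤ d - 1 → ∑ i, (γ + Pi.single k 1 : ι → ℕ) i ≤ d := by
    intro γ hγ
    simp only [Pi.add_apply, Finset.sum_add_distrib, Finset.sum_pi_single', Finset.mem_univ,
      if_true]
    omega
  calc x α ⬝ᵥ T *ᵥ x β = x α ⬝ᵥ x (β + Pi.single k 1) := by rw [hshift β hβ]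
    _ = y (α + β + Pi.single k 1) := by
      rw [hhankel α _ (hα.trans (d.sub_le 1)) (hsucc β hβ), add_assoc]
    _ = x (α + Pi.single k 1) ⬝ᵥ x β := by
      rw [hhankel _ β (hsucc α hα) (hβ.trans (d.sub_le 1)), add_right_comm]
    _ = T *ᵥ x α ⬝ᵥ x β := by rw [hshift α hα]

theorem hankel_shifts_are_complex_symmetric
    (n r d : ℕ) (T : Fin n → Matrix (Fin r) (Fin r) ℂ)
    (x : (Fin n → ℕ) → (Fin r → ℂ)) (y : (Fin n → ℕ) → ℂ)
    (hhankel : ∀ α β : Fin n → ℕ, ∑ i, α i ≤ d → ∑ i, β i ≤ d →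
      x α ⬝ᵥ x β = y (α + β))
    (hshift : ∀ (k : Fin n) (α : Fin n → ℕ), ∑ i, α i ≤ d - 1 →
      T k *ᵥ x α = x (α + Pi.single k 1))
    (hspan : Submodule.span ℂ {v | ∃ α : Fin n → ℕ, ∑ i, α i ≤ d - 1 ∧ v = x α} = ⊤) :
    ∀ k, (T k)ᵀ = T k := by
  intro k
  refine (isSymm_of_dotProduct_mulVec_comm_on_spanning hspan ?_).eq
  rintro _ ⟨α, hα, rfl⟩ _ ⟨β, hβ, rfl⟩
  exact hankel_dotProduct_mulVec_comm hhankel (hshift k) hα hβ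
end
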